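/- For λ ∈ [0,1] and real random variables X, Y on a finite probability space, CVaR_α(λ X + (1−λ) Y) ≤ λ CVaR_α(X) + (1−λ) CVaR_α(Y), where CVaR_α(X) := inf_{z ∈ ℝ} E[z + (X − z)⁺/(1−α)], α ∈ (0,1). -/

import Mathlib

/-!
The Rockafellar–Uryasev objective `E[z + (X - z)⁺ / (1 - α)]` is jointly convex in `(X, z)`
because `x ↦ x⁺` is convex and monotone. Evaluating it at the convex combination of
near-optimal `z₁` for `X` and `z₂` for `Y` gives the inequality; the infimum on the left is a
genuine one since the objective is bounded below by `E[X]`, as `1 / (1 - α) ≥ 1`.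
-/

open Finset Set

lemma ciInf_le_mul_ciInf_add_mul_ciInf {ι κ μ : Type*} [Nonempty κ] [Nonempty μ]
    {f : ι → ℝ} {g : κ → ℝ} {h : μ → ℝ} {s t : ℝ} (hs : 0 ≤ s) (ht : 0 ≤ t)
    (hf : BddBelow (range f)) (hfgh : ∀ a b, ∃ c, f c ≤ s * g a + t * h b) :
    ⨅ c, f c ≤ s * (⨅ a, g a) + t * ⨅ b, h b := by
  rw [Real.mul_iInf_of_nonneg hs, Real.mul_iInf_of_nonneg ht]
  refine le_ciInf_add_ciInf fun a b => ?_
  obtain ⟨c, hc⟩ := hfgh a b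
  exact (ciInf_le hf c).trans hc

lemma max_zero_convex_comb_le {a b t : ℝ} (ht₀ : 0 ≤ t) (ht₁ : t ≤ 1) :
    max (t * a + (1 - t) * b) 0 ≤ t * max a 0 + (1 - t) * max b 0 := by
  apply max_le <;> nlinarith [le_max_left a 0, le_max_left b 0, le_max_right a 0, le_max_right b 0]

section CVaR

variable {Ω : Type*} [Fintype Ω] {p : Ω → ℝ} {α : ℝ}

noncomputable def cvarObjective (p : Ω → ℝ) (α : ℝ) (X : Ω → ℝ) (z : ℝ) : ℝ :=
  ∑ ω, p ω * (z + max (X ω - z) 0 / (1 - α))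

noncomputable def cvar (p : Ω → ℝ) (α : ℝ) (X : Ω → ℝ) : ℝ :=
  ⨅ z, cvarObjective p α X z

lemma sum_mul_le_cvarObjective (hp : ∀ ω, 0 ≤ p ω) (hα₀ : 0 ≤ α) (hα₁ : α < 1)
    (X : Ω → ℝ) (z : ℝ) : ∑ ω, p ω * X ω ≤ cvarObjective p α X z := by
  refine sum_le_sum fun ω _ => mul_le_mul_of_nonneg_left ?_ (hp ω)
  have hpos : X ω - z ≤ max (X ω - z) 0 / (1 - α) := by
    rw [le_div_iff₀ (by linarith)]
    nlinarith [le_max_left (X ω - z) 0, le_max_right (X ω - z) 0]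
  linarith

lemma bddBelow_range_cvarObjective (hp : ∀ ω, 0 ≤ p ω) (hα₀ : 0 ≤ α) (hα₁ : α < 1)
    (X : Ω → ℝ) : BddBelow (range (cvarObjective p α X)) :=
  ⟨_, forall_mem_range.2 (sum_mul_le_cvarObjective hp hα₀ hα₁ X)⟩

lemma cvarObjective_convex_comb_le (hp : ∀ ω, 0 ≤ p ω) (hα : α ≤ 1) {t : ℝ} (ht₀ : 0 ≤ t)
    (ht₁ : t ≤ 1) (X Y : Ω → ℝ) (z₁ z₂ : ℝ) :
    cvarObjective p α (fun ω => t * X ω + (1 - t) * Y ω) (t * z₁ + (1 - t) * z₂) ≤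
      t * cvarObjective p α X z₁ + (1 - t) * cvarObjective p α Y z₂ := by
  simp only [cvarObjective, mul_sum, ← sum_add_distrib]
  refine sum_le_sum fun ω _ => ?_
  have hplus : max (t * X ω + (1 - t) * Y ω - (t * z₁ + (1 - t) * z₂)) 0 / (1 - α) ≤
      (t * max (X ω - z₁) 0 + (1 - t) * max (Y ω - z₂) 0) / (1 - α) := by
    refine div_le_div_of_nonneg_right ?_ (sub_nonneg.2 hα)
    calc max (t * X ω + (1 - t) * Y ω - (t * z₁ + (1 - t) * z₂)) 0
        = max (t * (X ω - z₁) + (1 - t) * (Y ω - z₂)) 0 := by ring_nf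
      _ ≤ _ := max_zero_convex_comb_le ht₀ ht₁
  linear_combination mul_le_mul_of_nonneg_left hplus (hp ω)

lemma cvar_convex_comb_le (hp : ∀ ω, 0 ≤ p ω) (hα₀ : 0 ≤ α) (hα₁ : α < 1) {t : ℝ}
    (ht₀ : 0 ≤ t) (ht₁ : t ≤ 1) (X Y : Ω → ℝ) :
    cvar p α (fun ω => t * X ω + (1 - t) * Y ω) ≤ t * cvar p α X + (1 - t) * cvar p α Y :=
  ciInf_le_mul_ciInf_add_mul_ciInf ht₀ (sub_nonneg.2 ht₁)
    (bddBelow_range_cvarObjective hp hα₀ hα₁ _) fun z₁ z₂ =>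
      ⟨_, cvarObjective_convex_comb_le hp hα₁.le ht₀ ht₁ X Y z₁ z₂⟩

end CVaR

theorem stmt_7_general (Ω : Type*) [Fintype Ω] (p : Ω → ℝ)
    (hp : ∀ ω, 0 ≤ p ω)
    (X Y : Ω → ℝ) (α : ℝ) (hα : α ∈ Set.Ioo (0 : ℝ) 1)
    (lam : ℝ) (hlam : lam ∈ Set.Icc (0 : ℝ) 1) :
    (⨅ z : ℝ, ∑ ω, p ω * (z + max (lam * X ω + (1 - lam) * Y ω - z) 0 / (1 - α))) ≤
      lam * (⨅ z : ℝ, ∑ ω, p ω * (z + max (X ω - z) 0 / (1 - α))) +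
        (1 - lam) * (⨅ z : ℝ, ∑ ω, p ω * (z + max (Y ω - z) 0 / (1 - α))) :=
  cvar_convex_comb_le hp hα.1.le hα.2 hlam.1 hlam.2 X Y

/-- Convexity of CVaR: for `λ ∈ [0,1]`,
`CVaR_α(λX + (1−λ)Y) ≤ λ CVaR_α(X) + (1−λ) CVaR_α(Y)`. -/
theorem stmt_7 (Ω : Type*) [Fintype Ω] (p : Ω → ℝ)
    (hp : ∀ ω, 0 ≤ p ω) (hsum : ∑ ω, p ω = 1)
    (X Y : Ω → ℝ) (α : ℝ) (hα : α ∈ Set.Ioo (0 : ℝ) 1)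
    (lam : ℝ) (hlam : lam ∈ Set.Icc (0 : ℝ) 1) :
    (⨅ z : ℝ, ∑ ω, p ω * (z + max (lam * X ω + (1 - lam) * Y ω - z) 0 / (1 - α))) ≤
      lam * (⨅ z : ℝ, ∑ ω, p ω * (z + max (X ω - z) 0 / (1 - α))) +
        (1 - lam) * (⨅ z : ℝ, ∑ ω, p ω * (z + max (Y ω - z) 0 / (1 - α))) :=
  stmt_7_general Ω p hp X Y α hα lam hlam
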